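/- The group G_n = ⟨P₀, P₁, J | P₀ⁿ, P₁ⁿ, Jⁿ, [J,P₀], [J,P₁], Jⁱ(P₀ⁱP₁⁻ⁱ)² for 1 ≤ i ≤ ⌊n/2⌋⟩ has order at most n² · 2^{n-1}. -/

import Mathlib

open FreeGroup

/-- Free-group generators: `0 ↦ P₀`, `1 ↦ P₁`, `2 ↦ J`. -/
def chshRels (n : ℕ) : Set (FreeGroup (Fin 3)) :=
  {w | w = (FreeGroup.of 0) ^ n ∨ w = (FreeGroup.of 1) ^ n ∨ w = (FreeGroup.of 2) ^ n ∨
    w = (FreeGroup.of 2) * (FreeGroup.of 0) * (FreeGroup.of 2)⁻¹ * (FreeGroup.of 0)⁻¹ ∨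
    w = (FreeGroup.of 2) * (FreeGroup.of 1) * (FreeGroup.of 2)⁻¹ * (FreeGroup.of 1)⁻¹ ∨
    ∃ i : ℕ, 1 ≤ i ∧ i ≤ n / 2 ∧
      w = (FreeGroup.of 2) ^ i * ((FreeGroup.of 0) ^ i * ((FreeGroup.of 1) ^ i)⁻¹) ^ 2}

/-- The group `G_n` of the generalized CHSH game. -/
def Gn (n : ℕ) : Type := PresentedGroup (chshRels n)

instance (n : ℕ) : Group (Gn n) := by unfold Gn; infer_instance

/-!
Write `c k = P₀ᵏ P₁⁻ᵏ` for `k : ℤ`. The relations give `c k ^ 2 = J⁻ᵏ` for `1 ≤ k ≤ n / 2`;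
since `c` is `n`-periodic and `c (-k)` is conjugate to `(c k)⁻¹`, this holds for every `k`.
As `(c k)⁻¹ * c m` is conjugate to `c (m - k)`, the identity `(xy)² = x²y²` then forces the `c k`
to commute. So `N = ⟨J, c k⟩` is abelian and generated by `J` and `c 1, …, c (n - 1)`, whose
squares lie in `⟨J⟩`: its elements are `Jⁱ ∏ c_k^{q_k}` with `q_k ∈ {0, 1}`, and `|N| ≤ n 2ⁿ⁻¹`.
Conjugation by `P₀ᵖ` maps `c k` to `c (k + p) (c p)⁻¹`, so `N` is normal, and `P₁ = P₀ c (-1)`,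
so `G = ⟨P₀⟩ N` and `|G| ≤ n |N|`.
-/

open Subgroup Set

section CommGroup

variable {A ι : Type*} [CommGroup A] {j : A} {c : ι → A}

theorem exists_mem_zpowers_mul_prod_eq_mul_prod_mul
    (hsq : ∀ i, c i ^ 2 ∈ zpowers j) {y : A} (hy : y ∈ zpowers j) (s : Finset ι) (i : ι) :
    ∃ y' ∈ zpowers j, ∃ s' : Finset ι, y' * ∏ k ∈ s', c k = y * (∏ k ∈ s, c k) * c i := by
  classical
  by_cases hi : i ∈ s
  · refine ⟨y * c i ^ 2, mul_mem hy (hsq i), s.erase i, ?_⟩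
    rw [← Finset.mul_prod_erase s c hi, sq]
    ac_rfl
  · exact ⟨y, hy, insert i s, by rw [Finset.prod_insert hi, mul_comm (c i), mul_assoc]⟩

theorem exists_mem_zpowers_mul_prod_eq
    (hgen : closure (insert j (range c)) = ⊤) (hsq : ∀ i, c i ^ 2 ∈ zpowers j) (x : A) :
    ∃ y ∈ zpowers j, ∃ s : Finset ι, y * ∏ i ∈ s, c i = x := by
  have hx : x ∈ closure (insert j (range c)) := hgen ▸ mem_top x
  induction hx using closure_induction_right with
  | one => exact ⟨1, one_mem _, ∅, by simp⟩
  | mul_right x _ g hg ih =>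
    obtain ⟨y, hy, s, rfl⟩ := ih
    rcases hg with rfl | ⟨i, rfl⟩
    · exact ⟨y * g, mul_mem hy (mem_zpowers g), s, mul_right_comm _ _ _⟩
    · exact exists_mem_zpowers_mul_prod_eq_mul_prod_mul hsq hy s i
  | mul_inv_cancel x _ g hg ih =>
    obtain ⟨y, hy, s, rfl⟩ := ih
    rcases hg with rfl | ⟨i, rfl⟩
    · exact ⟨y * g⁻¹, mul_mem hy (inv_mem (mem_zpowers g)), s, mul_right_comm _ _ _⟩
    · obtain ⟨y', hy', s', hs'⟩ := exists_mem_zpowers_mul_prod_eq_mul_prod_mul hsq hy s i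
      -- `(c i)⁻¹ = c i * (c i ^ 2)⁻¹`
      refine ⟨y' * (c i ^ 2)⁻¹, mul_mem hy' (inv_mem (hsq i)), s', ?_⟩
      rw [mul_right_comm, hs', sq]
      group

theorem card_le_orderOf_mul_two_pow_of_sq_mem_zpowers [Fintype ι]
    (hgen : closure (insert j (range c)) = ⊤) (hsq : ∀ i, c i ^ 2 ∈ zpowers j)
    (hj : IsOfFinOrder j) : Nat.card A ≤ orderOf j * 2 ^ Fintype.card ι := by
  have : Finite (zpowers j) := hj.finite_zpowers.to_subtype
  let f : zpowers j × Finset ι → A := fun p => p.1 * ∏ i ∈ p.2, c i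
  have hf : f.Surjective := fun x =>
    let ⟨y, hy, s, hs⟩ := exists_mem_zpowers_mul_prod_eq hgen hsq x
    ⟨(⟨y, hy⟩, s), hs⟩
  calc Nat.card A ≤ Nat.card (zpowers j × Finset ι) := Nat.card_le_card_of_surjective f hf
    _ = orderOf j * 2 ^ Fintype.card ι := by
      rw [Nat.card_prod, Nat.card_zpowers, Nat.card_eq_fintype_card, Fintype.card_finset]

theorem card_le_orderOf_mul_two_pow_of_periodic {n : ℕ} (hn : 0 < n) {c : ℤ → A}
    (hc : Function.Periodic c n) (hc0 : c 0 = 1) (hgen : closure (insert j (range c)) = ⊤)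
    (hsq : ∀ k, c k ^ 2 ∈ zpowers j) (hj : IsOfFinOrder j) :
    Nat.card A ≤ orderOf j * 2 ^ (n - 1) := by
  have hrange : range c ⊆ closure (insert j (range fun i : Fin (n - 1) => c (i + 1))) := by
    rintro _ ⟨k, rfl⟩
    obtain ⟨r, ⟨hr0, hrn⟩, hr⟩ := hc.exists_mem_Ico₀ (by exact_mod_cast hn) k
    rw [hr]
    rcases hr0.eq_or_lt with rfl | hr0
    · rw [hc0]; exact one_mem _
    · refine subset_closure (mem_insert_of_mem _ ⟨⟨(r - 1).toNat, by omega⟩, ?_⟩)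
      simp only
      congr 1
      omega
  have hgen' : closure (insert j (range fun i : Fin (n - 1) => c (i + 1))) = ⊤ :=
    top_le_iff.mp (hgen ▸ (closure_le _).2 (insert_subset (subset_closure (mem_insert _ _)) hrange))
  simpa using card_le_orderOf_mul_two_pow_of_sq_mem_zpowers hgen' (fun i => hsq _) hj

end CommGroup

theorem Subgroup.card_le_card_mul_card_of_sup_eq_top {G : Type*} [Group G] {H N : Subgroup G}
    [N.Normal] (h : H ⊔ N = ⊤) : Nat.card G ≤ Nat.card H * Nat.card N := by
  rcases Nat.eq_zero_or_pos (Nat.card H) with hH | hH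
  · have hdvd := H.card_subgroup_dvd_card
    rw [hH, zero_dvd_iff] at hdvd
    exact hdvd.trans_le (Nat.zero_le _)
  · rw [← N.index_mul_card, ← relIndex_top_right, ← h, relIndex_sup_right]
    exact Nat.mul_le_mul_right _ (Nat.le_of_dvd hH (relIndex_dvd_card _ _))

theorem commute_of_mul_sq_eq_sq_mul_sq {G : Type*} [Group G] {x y : G}
    (h : (x * y) ^ 2 = x ^ 2 * y ^ 2) : Commute x y := by
  rw [sq, sq, sq, mul_assoc, mul_assoc, mul_left_cancel_iff, ← mul_assoc, ← mul_assoc,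
    mul_right_cancel_iff] at h
  exact h.symm

namespace CHSH

variable {G : Type*} [Group G] {n : ℕ} {a b j : G}

theorem periodic_div_zpow (ha : a ^ n = 1) (hb : b ^ n = 1) :
    Function.Periodic (fun k : ℤ => a ^ k / b ^ k) n := by
  intro k
  simp only [zpow_add, zpow_natCast, ha, hb, mul_one]

theorem sq_div_zpow (hn : 0 < n) (ha : a ^ n = 1) (hb : b ^ n = 1) (hj : j ^ n = 1)
    (hja : Commute j a) (hrel : ∀ i : ℕ, 1 ≤ i → i ≤ n / 2 → j ^ i * (a ^ i * (b ^ i)⁻¹) ^ 2 = 1)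
    (k : ℤ) : (a ^ k / b ^ k) ^ 2 = j ^ (-k) := by
  set f : ℤ → G := fun k => (a ^ k / b ^ k) ^ 2 * j ^ k with hf_def
  have hf : Function.Periodic f n := fun k => by
    simp only [hf_def, zpow_add, zpow_natCast, ha, hb, hj, mul_one]
  have hneg : ∀ k, f k = 1 → f (-k) = 1 := by
    intro k hk
    have hsq : (a ^ k / b ^ k) ^ 2 = (j ^ k)⁻¹ := eq_inv_of_mul_eq_one_left hk
    have hconj : a ^ (-k) / b ^ (-k) = a ^ (-k) * (a ^ k / b ^ k)⁻¹ * (a ^ (-k))⁻¹ := by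
      simp only [div_eq_mul_inv, mul_inv_rev, inv_inv]
      group
    rw [hf_def]
    dsimp only
    rw [hconj, conj_pow, inv_pow, hsq, inv_inv, (hja.zpow_zpow k (-k)).symm.mul_inv_cancel,
      ← zpow_add, add_neg_cancel, zpow_zero]
  have hsmall : ∀ i : ℕ, i ≤ n / 2 → f i = 1 := by
    intro i hi
    rcases Nat.eq_zero_or_pos i with rfl | hi0
    · simp [hf_def]
    · have := hrel i hi0 hi
      simp only [hf_def, zpow_natCast, div_eq_mul_inv]
      exact mul_eq_one_comm.mp this
  suffices f k = 1 by rwa [zpow_neg, ← mul_eq_one_iff_eq_inv]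
  obtain ⟨r, ⟨hr0, hrn⟩, hr⟩ := hf.exists_mem_Ico₀ (by exact_mod_cast hn) k
  lift r to ℕ using hr0
  rw [hr]
  rcases le_or_gt r (n / 2) with hr2 | hr2
  · exact hsmall r hr2
  · have := hneg _ (hsmall (n - r) (by omega))
    rwa [show -((n - r : ℕ) : ℤ) = r - n by omega, hf.sub_eq] at this

theorem commute_div_zpow (hsq : ∀ k : ℤ, (a ^ k / b ^ k) ^ 2 = j ^ (-k)) (hjb : Commute j b)
    (k m : ℤ) : Commute (a ^ k / b ^ k) (a ^ m / b ^ m) := by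
  refine Commute.inv_left_iff.mp (commute_of_mul_sq_eq_sq_mul_sq ?_)
  have hconj : (a ^ k / b ^ k)⁻¹ * (a ^ m / b ^ m)
      = b ^ k * (a ^ (m - k) / b ^ (m - k)) * (b ^ k)⁻¹ := by
    simp only [div_eq_mul_inv, mul_inv_rev, inv_inv]
    group
  rw [hconj, conj_pow, hsq, inv_pow, hsq, hsq, (hjb.zpow_zpow _ k).symm.mul_inv_cancel]
  group

def divZPowClosure (a b j : G) : Subgroup G :=
  closure (insert j (range fun k : ℤ => a ^ k / b ^ k))

theorem div_zpow_mem_divZPowClosure (k : ℤ) : a ^ k / b ^ k ∈ divZPowClosure a b j :=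
  subset_closure (mem_insert_of_mem _ ⟨k, rfl⟩)

theorem mem_divZPowClosure_self : j ∈ divZPowClosure a b j :=
  subset_closure (mem_insert _ _)

theorem zpowers_le_normalizer_divZPowClosure (hja : Commute j a) :
    zpowers a ≤ normalizer (divZPowClosure a b j : Set G) := by
  refine le_normalizer_closure_iff.mpr ?_
  rintro _ ⟨p, rfl⟩ g (rfl | ⟨k, rfl⟩)
  · rw [(hja.zpow_right p).symm.mul_inv_cancel]
    exact mem_divZPowClosure_self
  · have hconj : a ^ p * (a ^ k / b ^ k) * (a ^ p)⁻¹
        = (a ^ (k + p) / b ^ (k + p)) / (a ^ p / b ^ p) := by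
      simp only [div_eq_mul_inv, mul_inv_rev, inv_inv]
      group
    simp only [hconj]
    exact div_mem (div_zpow_mem_divZPowClosure _) (div_zpow_mem_divZPowClosure _)

theorem zpowers_sup_divZPowClosure (hgen : closure {a, b, j} = ⊤) :
    zpowers a ⊔ divZPowClosure a b j = ⊤ := by
  rw [eq_top_iff, ← hgen, closure_le, insert_subset_iff, insert_subset_iff, singleton_subset_iff]
  have hb : a * (a ^ (-1 : ℤ) / b ^ (-1 : ℤ)) = b := by simp [div_eq_mul_inv]
  refine ⟨mem_sup_left (mem_zpowers _), ?_, mem_sup_right mem_divZPowClosure_self⟩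
  have := mul_mem (mem_sup_left (mem_zpowers a))
    (mem_sup_right (div_zpow_mem_divZPowClosure (a := a) (b := b) (j := j) (-1)))
  rwa [hb] at this

theorem divZPowClosure_normal (hja : Commute j a) (hgen : closure {a, b, j} = ⊤) :
    (divZPowClosure a b j).Normal := by
  rw [← normalizer_eq_top_iff, eq_top_iff, ← zpowers_sup_divZPowClosure hgen]
  exact sup_le (zpowers_le_normalizer_divZPowClosure hja) le_normalizer

theorem isMulCommutative_divZPowClosure (hsq : ∀ k : ℤ, (a ^ k / b ^ k) ^ 2 = j ^ (-k))
    (hja : Commute j a) (hjb : Commute j b) : IsMulCommutative (divZPowClosure a b j) := by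
  have hj (k : ℤ) : Commute j (a ^ k / b ^ k) := by
    rw [div_eq_mul_inv]
    exact (hja.zpow_right k).mul_right (hjb.zpow_right k).inv_right
  refine isMulCommutative_closure ?_
  rintro _ (rfl | ⟨k, rfl⟩) _ (rfl | ⟨m, rfl⟩)
  · rfl
  · exact (hj m).eq
  · exact (hj k).symm.eq
  · exact (commute_div_zpow hsq hjb k m).eq

open scoped IsMulCommutative in
theorem card_divZPowClosure_le (hn : 0 < n) (ha : a ^ n = 1) (hb : b ^ n = 1) (hj : j ^ n = 1)
    (hsq : ∀ k : ℤ, (a ^ k / b ^ k) ^ 2 = j ^ (-k)) (hja : Commute j a) (hjb : Commute j b) :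
    Nat.card (divZPowClosure a b j) ≤ n * 2 ^ (n - 1) := by
  have := isMulCommutative_divZPowClosure hsq hja hjb
  set N := divZPowClosure a b j
  let j' : N := ⟨j, mem_divZPowClosure_self⟩
  let c' : ℤ → N := fun k => ⟨a ^ k / b ^ k, div_zpow_mem_divZPowClosure k⟩
  have hgen : closure (insert j' (range c')) = ⊤ := by
    have hpre : ((↑) : N → G) ⁻¹' insert j (range fun k : ℤ => a ^ k / b ^ k)
        = insert j' (range c') := by
      ext x
      simp [j', c', Subtype.ext_iff]
    rw [← hpre]
    exact closure_closure_coe_preimage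
  have hj' : j' ^ n = 1 := Subtype.ext hj
  calc Nat.card N ≤ orderOf j' * 2 ^ (n - 1) :=
        card_le_orderOf_mul_two_pow_of_periodic hn
          (fun k => Subtype.ext (periodic_div_zpow ha hb k)) (by ext; simp [c']) hgen
          (fun k => ⟨-k, Subtype.ext (hsq k).symm⟩) (isOfFinOrder_iff_pow_eq_one.2 ⟨n, hn, hj'⟩)
    _ ≤ n * 2 ^ (n - 1) := Nat.mul_le_mul_right _ (orderOf_le_of_pow_eq_one hn hj')

theorem card_le_sq_mul_two_pow (hn : 0 < n) (ha : a ^ n = 1) (hb : b ^ n = 1) (hj : j ^ n = 1)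
    (hja : Commute j a) (hjb : Commute j b)
    (hrel : ∀ i : ℕ, 1 ≤ i → i ≤ n / 2 → j ^ i * (a ^ i * (b ^ i)⁻¹) ^ 2 = 1)
    (hgen : closure {a, b, j} = ⊤) : Nat.card G ≤ n ^ 2 * 2 ^ (n - 1) := by
  have hsq := sq_div_zpow hn ha hb hj hja hrel
  have := divZPowClosure_normal hja hgen
  calc Nat.card G ≤ Nat.card (zpowers a) * Nat.card (divZPowClosure a b j) :=
        card_le_card_mul_card_of_sup_eq_top (zpowers_sup_divZPowClosure hgen)
    _ ≤ n * (n * 2 ^ (n - 1)) :=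
        Nat.mul_le_mul (Nat.card_zpowers a ▸ orderOf_le_of_pow_eq_one hn ha)
          (card_divZPowClosure_le hn ha hb hj hsq hja hjb)
    _ = n ^ 2 * 2 ^ (n - 1) := by ring

end CHSH

theorem stmt_7 (n : ℕ) (hn : 2 ≤ n) :
    Nat.card (Gn n) ≤ n ^ 2 * 2 ^ (n - 1) := by
  let x (i : Fin 3) : PresentedGroup (chshRels n) := PresentedGroup.of i
  have rel {w : FreeGroup (Fin 3)} (hw : w ∈ chshRels n) : PresentedGroup.mk _ w = 1 :=
    PresentedGroup.one_of_mem hw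
  have hx (i : Fin 3) : PresentedGroup.mk (chshRels n) (FreeGroup.of i) = x i := rfl
  have hcomm (i : Fin 3) (hi : of 2 * of i * (of 2)⁻¹ * (of i)⁻¹ ∈ chshRels n) :
      Commute (x 2) (x i) :=
    commutatorElement_eq_one_iff_commute.mp (by simpa [hx, commutatorElement_def] using rel hi)
  have hgen : Subgroup.closure {x 0, x 1, x 2} = ⊤ := by
    rw [← PresentedGroup.closure_range_of]
    congr 1
    ext
    simp [x, Fin.exists_fin_succ, eq_comm]
  show Nat.card (PresentedGroup (chshRels n)) ≤ _
  exact CHSH.card_le_sq_mul_two_pow (by omega)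
    (by simpa [hx] using rel (Or.inl rfl)) (by simpa [hx] using rel (Or.inr (Or.inl rfl)))
    (by simpa [hx] using rel (Or.inr (Or.inr (Or.inl rfl))))
    (hcomm 0 (by simp [chshRels])) (hcomm 1 (by simp [chshRels]))
    (fun i h1 h2 => by
      simpa [hx] using rel (.inr <| .inr <| .inr <| .inr <| .inr ⟨i, h1, h2, rfl⟩))
    hgen
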